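/- Main theorem, quasi-conjunction case: for events E1, H1, E2, H2, E3, H3 with P(Hi) > 0 for i = 1, 2, 3, if QC(E1|H1, E2|H2) ⊑ E3|H3 in the sense of Goodman–Nguyen (i.e., Q∩(H1∪H2) ⊆ E3∩H3 and E3ᶜ∩H3 ⊆ Qᶜ∩(H1∪H2)), then the triple conjunction satisfies C3(ω) = C12(ω) for every ω ∈ Ω (where C12 := ⟦(E1|H1)∧(E2|H2)⟧) and x123 = x12; consequently, if x12 > 0, the iterated conditional satisfies ⟦(E3|H3)|((E1|H1)∧(E2|H2))⟧(ω) = 1 for every ω ∈ Ω. -/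

import Mathlib

open MeasureTheory Set
open scoped Classical

noncomputable section

variable {Ω : Type*} [MeasurableSpace Ω]

/-- Indicator (with values in `ℝ`) of a set. -/
def ind (A : Set Ω) : Ω → ℝ := A.indicator 1

/-- Conditional probability `P(A|H) = P(A ∩ H)/P(H)`. -/
def condProb (P : Measure Ω) (A H : Set Ω) : ℝ :=
  (P (A ∩ H)).toReal / (P H).toReal

/-- The (indicator of the) conditional event `A|H`,
`⟦A|H⟧ = 1_{A∩H} + P(A|H)·1_{Hᶜ}`. -/
def condEvent (P : Measure Ω) (A H : Set Ω) : Ω → ℝ :=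
  fun ω => ind (A ∩ H) ω + condProb P A H * ind Hᶜ ω

/-- The prevision `z` of the conjunction `(A|H) ∧ (B|K)`:
`z = E[min(⟦A|H⟧, ⟦B|K⟧)·1_{H∪K}]/P(H∪K)`. -/
def conjPrev (P : Measure Ω) (A H B K : Set Ω) : ℝ :=
  (∫ ω, min (condEvent P A H ω) (condEvent P B K ω) * ind (H ∪ K) ω ∂P) /
    (P (H ∪ K)).toReal

/-- The conjunction `⟦(A|H) ∧ (B|K)⟧ = min(⟦A|H⟧, ⟦B|K⟧)·1_{H∪K} + z·1_{(H∪K)ᶜ}`. -/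
def conjCE (P : Measure Ω) (A H B K : Set Ω) : Ω → ℝ :=
  fun ω => min (condEvent P A H ω) (condEvent P B K ω) * ind (H ∪ K) ω
    + conjPrev P A H B K * ind (H ∪ K)ᶜ ω

/-- The iterated conditional `⟦(B|K)|(A|H)⟧ = ⟦(A|H)∧(B|K)⟧ + μ·(1 − ⟦A|H⟧)`,
with `μ = z / P(A|H)`. -/
def iterCond (P : Measure Ω) (A H B K : Set Ω) : Ω → ℝ :=
  fun ω => conjCE P A H B K ω +
    (conjPrev P A H B K / condProb P A H) * (1 - condEvent P A H ω)

/-- Goodman–Nguyen logical implication between conditional events: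
`A|H ⊑ B|K` iff `A∩H ⊆ B∩K` and `Bᶜ∩K ⊆ Aᶜ∩H`. -/
def GNle (A H B K : Set Ω) : Prop := A ∩ H ⊆ B ∩ K ∧ Bᶜ ∩ K ⊆ Aᶜ ∩ H

/-- Triple conjunction `⟦(E1|H1)∧(E2|H2)∧(E3|H3)⟧`, defined piecewise, except that
on `H1ᶜ∩H2ᶜ∩H3ᶜ` it is set to `0` (it is irrelevant there for computing `x123`). -/
def c3base (P : Measure Ω) (E1 H1 E2 H2 E3 H3 : Set Ω) : Ω → ℝ := fun ω =>
  if ω ∈ E1 ∩ H1 ∩ (E2 ∩ H2) ∩ (E3 ∩ H3) then 1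
  else if ω ∈ (E1ᶜ ∩ H1) ∪ (E2ᶜ ∩ H2) ∪ (E3ᶜ ∩ H3) then 0
  else if ω ∈ H1ᶜ ∩ (E2 ∩ H2) ∩ (E3 ∩ H3) then condProb P E1 H1
  else if ω ∈ H2ᶜ ∩ (E1 ∩ H1) ∩ (E3 ∩ H3) then condProb P E2 H2
  else if ω ∈ H3ᶜ ∩ (E1 ∩ H1) ∩ (E2 ∩ H2) then condProb P E3 H3
  else if ω ∈ H1ᶜ ∩ H2ᶜ ∩ (E3 ∩ H3) then conjPrev P E1 H1 E2 H2
  else if ω ∈ H1ᶜ ∩ H3ᶜ ∩ (E2 ∩ H2) then conjPrev P E1 H1 E3 H3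
  else if ω ∈ H2ᶜ ∩ H3ᶜ ∩ (E1 ∩ H1) then conjPrev P E2 H2 E3 H3
  else 0

/-- The prevision `x123 = E[C3·1_{H1∪H2∪H3}]/P(H1∪H2∪H3)` of the triple conjunction. -/
def x123 (P : Measure Ω) (E1 H1 E2 H2 E3 H3 : Set Ω) : ℝ :=
  (∫ ω, c3base P E1 H1 E2 H2 E3 H3 ω * ind (H1 ∪ H2 ∪ H3) ω ∂P) /
    (P (H1 ∪ H2 ∪ H3)).toReal

/-- The triple conjunction `C3 = ⟦(E1|H1)∧(E2|H2)∧(E3|H3)⟧`, equal to `x123` on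
`H1ᶜ∩H2ᶜ∩H3ᶜ` and given piecewise by `c3base` elsewhere. -/
def c3 (P : Measure Ω) (E1 H1 E2 H2 E3 H3 : Set Ω) : Ω → ℝ := fun ω =>
  if ω ∈ H1ᶜ ∩ H2ᶜ ∩ H3ᶜ then x123 P E1 H1 E2 H2 E3 H3
  else c3base P E1 H1 E2 H2 E3 H3 ω

/-- The iterated conditional `⟦(E3|H3)|((E1|H1)∧(E2|H2))⟧ = C3 + μ·(1 − C12)`,
where `μ = x123/x12` and `C12 = ⟦(E1|H1)∧(E2|H2)⟧`. -/
def iter3 (P : Measure Ω) (E1 H1 E2 H2 E3 H3 : Set Ω) : Ω → ℝ := fun ω =>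
  c3 P E1 H1 E2 H2 E3 H3 ω +
    (x123 P E1 H1 E2 H2 E3 H3 / conjPrev P E1 H1 E2 H2) *
      (1 - conjCE P E1 H1 E2 H2 ω)

/-- The event `Q` of the quasi conjunction `QC(E1|H1, E2|H2) = Q|(H1∪H2)`. -/
def qcQ (E1 H1 E2 H2 : Set Ω) : Set Ω := (H1ᶜ ∪ (E1 ∩ H1)) ∩ (H2ᶜ ∪ (E2 ∩ H2))


/-! Under `QC(E1|H1, E2|H2) ⊑ E3|H3`, on `H1 ∪ H2` the conditional event `E3|H3` is true
whenever neither `E1|H1` nor `E2|H2` is false, so adding it as a third factor never lowers the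
minimum; off `H1 ∪ H2` it cannot be false, so on `H3 \ (H1 ∪ H2)` the triple conjunction takes
the value `x12`, as `C12` does. Hence `C3 = C12` on `H1 ∪ H2 ∪ H3`, and since integrating `C12`
over any event `S ⊇ H1 ∪ H2` gives `x12 · P(S)`, we get `x123 = x12`; then `C3 = C12`
everywhere and the iterated conditional is `C12 + (1 - C12) = 1`. -/

section ConditionalEvents

variable {P : Measure Ω} {A H B K S : Set Ω} {ω : Ω}

lemma condProb_nonneg (P : Measure Ω) (A H : Set Ω) : 0 ≤ condProb P A H := by
  unfold condProb
  positivity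

lemma condProb_le_one (P : Measure Ω) (A H : Set Ω) : condProb P A H ≤ 1 := by
  rcases eq_or_ne (P H) ⊤ with hH | hH
  · simp [condProb, hH]
  · exact div_le_one_of_le₀ (ENNReal.toReal_mono hH (measure_mono inter_subset_right))
      ENNReal.toReal_nonneg

lemma condEvent_of_mem_of_mem (hA : ω ∈ A) (hH : ω ∈ H) : condEvent P A H ω = 1 := by
  simp [condEvent, ind, hA, hH]

lemma condEvent_of_notMem_of_mem (hA : ω ∉ A) (hH : ω ∈ H) : condEvent P A H ω = 0 := by
  simp [condEvent, ind, hA, hH]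

lemma condEvent_of_notMem (hH : ω ∉ H) : condEvent P A H ω = condProb P A H := by
  simp [condEvent, ind, hH]

lemma condEvent_mem_Icc (P : Measure Ω) (A H : Set Ω) (ω : Ω) :
    condEvent P A H ω ∈ Icc 0 1 := by
  by_cases hH : ω ∈ H
  · by_cases hA : ω ∈ A
    · simp [condEvent_of_mem_of_mem hA hH]
    · simp [condEvent_of_notMem_of_mem hA hH]
  · rw [condEvent_of_notMem hH]
    exact ⟨condProb_nonneg P A H, condProb_le_one P A H⟩

lemma conjCE_of_mem_union (hω : ω ∈ H ∪ K) :
    conjCE P A H B K ω = min (condEvent P A H ω) (condEvent P B K ω) := by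
  simp only [conjCE, ind, indicator_of_mem hω, indicator_of_notMem (notMem_compl_iff.2 hω)]
  simp

lemma conjCE_of_notMem_union (hω : ω ∉ H ∪ K) : conjCE P A H B K ω = conjPrev P A H B K := by
  simp only [conjCE, ind, indicator_of_notMem hω, indicator_of_mem (mem_compl hω)]
  simp

lemma measurable_condEvent (P : Measure Ω) (hA : MeasurableSet A) (hH : MeasurableSet H) :
    Measurable (condEvent P A H) :=
  (measurable_one.indicator (hA.inter hH)).add ((measurable_one.indicator hH.compl).const_mul _)

lemma integrable_min_condEvent_mul_ind [IsFiniteMeasure P] (hA : MeasurableSet A)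
    (hH : MeasurableSet H) (hB : MeasurableSet B) (hK : MeasurableSet K) :
    Integrable (fun ω => min (condEvent P A H ω) (condEvent P B K ω) * ind (H ∪ K) ω) P := by
  refine Integrable.of_bound
    (((measurable_condEvent P hA hH).min (measurable_condEvent P hB hK)).mul
      (measurable_one.indicator (hH.union hK))).aestronglyMeasurable 1
    (Filter.Eventually.of_forall fun ω => ?_)
  obtain ⟨h0, h1⟩ := condEvent_mem_Icc P A H ω
  have hmin : min (condEvent P A H ω) (condEvent P B K ω) ∈ Icc (0 : ℝ) 1 :=
    ⟨le_min h0 (condEvent_mem_Icc P B K ω).1, (min_le_left _ _).trans h1⟩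
  by_cases hω : ω ∈ H ∪ K <;> simp [ind, hω, abs_of_nonneg hmin.1, hmin.2]

lemma integral_conjCE_mul_ind [IsFiniteMeasure P] (hA : MeasurableSet A)
    (hH : MeasurableSet H) (hB : MeasurableSet B) (hK : MeasurableSet K)
    (hS : MeasurableSet S) (hHKS : H ∪ K ⊆ S) (hHK : P (H ∪ K) ≠ 0) :
    ∫ ω, conjCE P A H B K ω * ind S ω ∂P = conjPrev P A H B K * P.real S := by
  have hsplit : (fun ω => conjCE P A H B K ω * ind S ω) = fun ω =>
      min (condEvent P A H ω) (condEvent P B K ω) * ind (H ∪ K) ω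
        + conjPrev P A H B K * ind (S \ (H ∪ K)) ω := by
    funext ω
    by_cases hω : ω ∈ H ∪ K
    · simp [conjCE_of_mem_union hω, ind, hω, hHKS hω]
    · by_cases hωS : ω ∈ S <;> simp [conjCE_of_notMem_union hω, ind, hω, hωS]
  have hmin : ∫ ω, min (condEvent P A H ω) (condEvent P B K ω) * ind (H ∪ K) ω ∂P
      = conjPrev P A H B K * P.real (H ∪ K) :=
    (div_mul_cancel₀ _ ((measureReal_ne_zero_iff).2 hHK)).symm
  have hind : Integrable (ind (S \ (H ∪ K))) P :=
    (integrable_const (1 : ℝ)).indicator (hS.diff (hH.union hK))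
  rw [hsplit, integral_add (integrable_min_condEvent_mul_ind hA hH hB hK) (hind.const_mul _),
    integral_const_mul, hmin, ind, integral_indicator_one (hS.diff (hH.union hK)), ← mul_add,
    measureReal_add_sdiff (hH.union hK), union_eq_right.2 hHKS]

end ConditionalEvents

section TripleConjunction

variable {P : Measure Ω} {E1 H1 E2 H2 E3 H3 : Set Ω} {ω : Ω}

lemma c3base_eq_min_of_mem_union (hGN1 : qcQ E1 H1 E2 H2 ∩ (H1 ∪ H2) ⊆ E3 ∩ H3)
    (hω : ω ∈ H1 ∪ H2) :
    c3base P E1 H1 E2 H2 E3 H3 ω = min (condEvent P E1 H1 ω) (condEvent P E2 H2 ω) := by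
  by_cases hfalse : ω ∈ E1ᶜ ∩ H1 ∪ E2ᶜ ∩ H2
  · have hnot : ω ∉ E1 ∩ H1 ∩ (E2 ∩ H2) ∩ (E3 ∩ H3) := by
      rintro ⟨⟨⟨hE1, -⟩, hE2, -⟩, -⟩
      rcases hfalse with ⟨hE1', -⟩ | ⟨hE2', -⟩ <;> contradiction
    rw [c3base, if_neg hnot, if_pos (subset_union_left hfalse)]
    rcases hfalse with ⟨hE1, hH1⟩ | ⟨hE2, hH2⟩
    · simp [condEvent_of_notMem_of_mem hE1 hH1, (condEvent_mem_Icc P E2 H2 ω).1]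
    · simp [condEvent_of_notMem_of_mem hE2 hH2, (condEvent_mem_Icc P E1 H1 ω).1]
  · have hQ : ω ∈ qcQ E1 H1 E2 H2 := by
      simp only [qcQ, mem_inter_iff, mem_union, mem_compl_iff] at hfalse ⊢
      tauto
    obtain ⟨hE3, hH3⟩ := hGN1 ⟨hQ, hω⟩
    have hE1 : ω ∈ H1 → ω ∈ E1 := fun h => by_contra fun hE => hfalse (.inl ⟨hE, h⟩)
    have hE2 : ω ∈ H2 → ω ∈ E2 := fun h => by_contra fun hE => hfalse (.inr ⟨hE, h⟩)
    by_cases hH1 : ω ∈ H1 <;> by_cases hH2 : ω ∈ H2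
    · simp [c3base, condEvent_of_mem_of_mem, hH1, hH2, hE1 hH1, hE2 hH2, hE3, hH3]
    · simp [c3base, condEvent_of_mem_of_mem, condEvent_of_notMem, condProb_le_one, hH1, hH2,
        hE1 hH1, hE3, hH3]
    · simp [c3base, condEvent_of_mem_of_mem, condEvent_of_notMem, condProb_le_one, hH1, hH2,
        hE2 hH2, hE3, hH3]
    · exact absurd hω (by simp [hH1, hH2])

lemma c3base_of_notMem_union_of_mem (hGN2 : E3ᶜ ∩ H3 ⊆ (qcQ E1 H1 E2 H2)ᶜ ∩ (H1 ∪ H2))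
    (hω : ω ∉ H1 ∪ H2) (hH3 : ω ∈ H3) :
    c3base P E1 H1 E2 H2 E3 H3 ω = conjPrev P E1 H1 E2 H2 := by
  have hE3 : ω ∈ E3 := by_contra fun hE3 => hω (hGN2 ⟨hE3, hH3⟩).2
  rw [mem_union, not_or] at hω
  simp [c3base, hω, hE3, hH3]

lemma c3base_eqOn_conjCE (hGN1 : qcQ E1 H1 E2 H2 ∩ (H1 ∪ H2) ⊆ E3 ∩ H3)
    (hGN2 : E3ᶜ ∩ H3 ⊆ (qcQ E1 H1 E2 H2)ᶜ ∩ (H1 ∪ H2)) :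
    EqOn (c3base P E1 H1 E2 H2 E3 H3) (conjCE P E1 H1 E2 H2) (H1 ∪ H2 ∪ H3) := by
  intro ω hω
  by_cases h12 : ω ∈ H1 ∪ H2
  · rw [c3base_eq_min_of_mem_union hGN1 h12, conjCE_of_mem_union h12]
  · rw [c3base_of_notMem_union_of_mem hGN2 h12 (hω.resolve_left h12),
      conjCE_of_notMem_union h12]

lemma x123_eq_conjPrev_of_eqOn [IsFiniteMeasure P] (hE1 : MeasurableSet E1)
    (hH1 : MeasurableSet H1) (hE2 : MeasurableSet E2) (hH2 : MeasurableSet H2)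
    (hH3 : MeasurableSet H3) (h12 : P (H1 ∪ H2) ≠ 0)
    (heq : EqOn (c3base P E1 H1 E2 H2 E3 H3) (conjCE P E1 H1 E2 H2) (H1 ∪ H2 ∪ H3)) :
    x123 P E1 H1 E2 H2 E3 H3 = conjPrev P E1 H1 E2 H2 := by
  have hU : MeasurableSet (H1 ∪ H2 ∪ H3) := (hH1.union hH2).union hH3
  have hU0 : P.real (H1 ∪ H2 ∪ H3) ≠ 0 :=
    (measureReal_ne_zero_iff).2 fun h => h12 (measure_mono_null subset_union_left h)
  have hint : ∫ ω, c3base P E1 H1 E2 H2 E3 H3 ω * ind (H1 ∪ H2 ∪ H3) ω ∂P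
      = ∫ ω, conjCE P E1 H1 E2 H2 ω * ind (H1 ∪ H2 ∪ H3) ω ∂P := by
    congr 1
    funext ω
    by_cases hω : ω ∈ H1 ∪ H2 ∪ H3
    · rw [heq hω]
    · simp [ind, hω]
  rw [x123, hint, integral_conjCE_mul_ind hE1 hH1 hE2 hH2 hU subset_union_left h12,
    ← measureReal_def, mul_div_cancel_right₀ _ hU0]

lemma c3_eq_conjCE_of_eqOn
    (heq : EqOn (c3base P E1 H1 E2 H2 E3 H3) (conjCE P E1 H1 E2 H2) (H1 ∪ H2 ∪ H3))
    (hx : x123 P E1 H1 E2 H2 E3 H3 = conjPrev P E1 H1 E2 H2) (ω : Ω) :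
    c3 P E1 H1 E2 H2 E3 H3 ω = conjCE P E1 H1 E2 H2 ω := by
  have hmem : ω ∈ H1ᶜ ∩ H2ᶜ ∩ H3ᶜ ↔ ω ∉ H1 ∪ H2 ∪ H3 := by
    rw [← mem_compl_iff, compl_union, compl_union]
  by_cases hω : ω ∈ H1 ∪ H2 ∪ H3
  · rw [c3, if_neg fun h => hmem.1 h hω, heq hω]
  · rw [c3, if_pos (hmem.2 hω), hx,
      conjCE_of_notMem_union fun h => hω (subset_union_left h)]

end TripleConjunction

theorem main_case_QC_general (P : Measure Ω) [IsProbabilityMeasure P]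
    (E1 H1 E2 H2 E3 H3 : Set Ω)
    (hE1 : MeasurableSet E1) (hH1 : MeasurableSet H1)
    (hE2 : MeasurableSet E2) (hH2 : MeasurableSet H2)
    (hH3 : MeasurableSet H3)
    (h1 : 0 < P H1)
    (hGN1 : qcQ E1 H1 E2 H2 ∩ (H1 ∪ H2) ⊆ E3 ∩ H3)
    (hGN2 : E3ᶜ ∩ H3 ⊆ (qcQ E1 H1 E2 H2)ᶜ ∩ (H1 ∪ H2)) :
    (∀ ω, c3 P E1 H1 E2 H2 E3 H3 ω = conjCE P E1 H1 E2 H2 ω) ∧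
      x123 P E1 H1 E2 H2 E3 H3 = conjPrev P E1 H1 E2 H2 ∧
      (0 < conjPrev P E1 H1 E2 H2 →
        ∀ ω, iter3 P E1 H1 E2 H2 E3 H3 ω = 1) := by
  have heq := c3base_eqOn_conjCE (P := P) hGN1 hGN2
  have h12 : P (H1 ∪ H2) ≠ 0 := fun h => h1.ne' (measure_mono_null subset_union_left h)
  have hx := x123_eq_conjPrev_of_eqOn hE1 hH1 hE2 hH2 hH3 h12 heq
  have hc3 := c3_eq_conjCE_of_eqOn heq hx
  refine ⟨hc3, hx, fun hpos ω => ?_⟩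
  rw [iter3, hc3, hx, div_self hpos.ne']
  ring

/-- Main theorem, quasi-conjunction case `QC(E1|H1, E2|H2) ⊑ E3|H3`
(Goodman–Nguyen): the triple conjunction `C3` coincides pointwise with
`C12 = ⟦(E1|H1)∧(E2|H2)⟧` and `x123 = x12`; consequently, if `x12 > 0`, the
iterated conditional `⟦(E3|H3)|((E1|H1)∧(E2|H2))⟧` is constantly `1`. -/
theorem main_case_QC (P : Measure Ω) [IsProbabilityMeasure P]
    (E1 H1 E2 H2 E3 H3 : Set Ω)
    (hE1 : MeasurableSet E1) (hH1 : MeasurableSet H1)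
    (hE2 : MeasurableSet E2) (hH2 : MeasurableSet H2)
    (hE3 : MeasurableSet E3) (hH3 : MeasurableSet H3)
    (h1 : 0 < P H1) (h2 : 0 < P H2) (h3 : 0 < P H3)
    (hGN1 : qcQ E1 H1 E2 H2 ∩ (H1 ∪ H2) ⊆ E3 ∩ H3)
    (hGN2 : E3ᶜ ∩ H3 ⊆ (qcQ E1 H1 E2 H2)ᶜ ∩ (H1 ∪ H2)) :
    (∀ ω, c3 P E1 H1 E2 H2 E3 H3 ω = conjCE P E1 H1 E2 H2 ω) ∧
      x123 P E1 H1 E2 H2 E3 H3 = conjPrev P E1 H1 E2 H2 ∧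
      (0 < conjPrev P E1 H1 E2 H2 →
        ∀ ω, iter3 P E1 H1 E2 H2 E3 H3 ω = 1) :=
  main_case_QC_general P E1 H1 E2 H2 E3 H3 hE1 hH1 hE2 hH2 hH3 h1 hGN1 hGN2

end
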